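/- For 0 ≤ α ≤ k and 0 ≤ j ≤ n, the projection of a product of Dicke states onto the symmetric subspace satisfies Π_{k+n}(|D_k^α⟩ ⊗ |D_n^j⟩) = √( C(k,α)C(n,j) / C(k+n, α+j) ) |D_{k+n}^{α+j}⟩. -/

import Mathlib

open scoped InnerProductSpace BigOperators ComplexConjugate

noncomputable section

/-- The Dicke state `|D_k^i⟩`: the normalized symmetric superposition of the
computational basis states of `k` qubits having exactly `i` zeros
(and `k - i` ones). -/
def Dicke (k i : ℕ) : EuclideanSpace ℂ (Fin k → Fin 2) :=
  WithLp.toLp 2 (fun x : Fin k → Fin 2 => if (Finset.univ.filter fun j => x j = 0).card = i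
    then ((Real.sqrt (k.choose i) : ℂ))⁻¹ else 0)

/-- The qubit basis state `|0⟩`. -/
def ket0 : EuclideanSpace ℂ (Fin 2) := WithLp.toLp 2 (fun b : Fin 2 => if b = 0 then 1 else 0)

/-- The qubit basis state `|1⟩`. -/
def ket1 : EuclideanSpace ℂ (Fin 2) := WithLp.toLp 2 (fun b : Fin 2 => if b = 1 then 1 else 0)

/-- The representation of a permutation `π ∈ S_k` on `(ℂ²)^{⊗k}`. -/
def permOp {k : ℕ} (π : Equiv.Perm (Fin k)) :
    EuclideanSpace ℂ (Fin k → Fin 2) →ₗ[ℂ] EuclideanSpace ℂ (Fin k → Fin 2) where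
  toFun v := WithLp.toLp 2 (fun x : Fin k → Fin 2 => v (fun j => x (π j)))
  map_add' _ _ := rfl
  map_smul' _ _ := rfl

/-- The projector `Π_k = (1/k!) ∑_{π ∈ S_k} V_π` onto the symmetric subspace
of `(ℂ²)^{⊗k}`. -/
def symProj (k : ℕ) :
    EuclideanSpace ℂ (Fin k → Fin 2) →ₗ[ℂ] EuclideanSpace ℂ (Fin k → Fin 2) :=
  ((k.factorial : ℂ))⁻¹ • ∑ π : Equiv.Perm (Fin k), permOp π

/-- The product `|D_k^α⟩ ⊗ |D_n^j⟩` viewed as a vector in `(ℂ²)^{⊗(k+n)}`. -/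
def dickeProd (k n α j : ℕ) : EuclideanSpace ℂ (Fin (k + n) → Fin 2) :=
  WithLp.toLp 2 (fun x : Fin (k + n) → Fin 2 => Dicke k α (fun i => x (Fin.castAdd n i)) *
    Dicke n j (fun i => x (Fin.natAdd k i)))


def Z {m : ℕ} (x : Fin m → Fin 2) : ℕ := (Finset.univ.filter fun i => x i = 0).card

lemma Z_comp_perm {m : ℕ} (x : Fin m → Fin 2) (π : Equiv.Perm (Fin m)) :
    Z (fun i => x (π i)) = Z x := by
  refine Finset.card_bij (fun i _ => π i) ?_ ?_ ?_
  · intro a ha; simpa using (Finset.mem_filter.mp ha).2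
  · intro a _ b _ h; exact π.injective h
  · intro b hb
    exact ⟨π.symm b, by simpa using (Finset.mem_filter.mp hb).2, by simp⟩

lemma Z_add {k n : ℕ} (x : Fin (k + n) → Fin 2) :
    Z x = Z (fun i : Fin k => x (Fin.castAdd n i)) + Z (fun i : Fin n => x (Fin.natAdd k i)) := by
  simp only [Z, Finset.card_filter]
  exact Fin.sum_univ_add _

lemma card_Z_eq (m a : ℕ) :
    ((Finset.univ : Finset (Fin m → Fin 2)).filter fun y => Z y = a).card = m.choose a := by
  have h0 : ((Finset.univ : Finset (Fin m)).powersetCard a).card = m.choose a := by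
    rw [Finset.card_powersetCard, Finset.card_univ, Fintype.card_fin]
  rw [← h0]
  refine Finset.card_bij (fun y _ => Finset.univ.filter fun i => y i = 0) ?_ ?_ ?_
  · intro y hy
    simp only [Finset.mem_powersetCard]
    exact ⟨Finset.subset_univ _, (Finset.mem_filter.mp hy).2⟩
  · intro y hy y' hy' h
    funext i
    have := Finset.ext_iff.mp h i
    simp only [Finset.mem_filter, Finset.mem_univ, true_and] at this
    omega
  · intro s hs
    simp only [Finset.mem_powersetCard] at hs
    refine ⟨fun i => if i ∈ s then 0 else 1, ?_, ?_⟩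
    · rw [Finset.mem_filter]; simp only [Finset.mem_univ, true_and, Z]
      rw [← hs.2]
      congr 1
      ext i
      simp only [Finset.mem_filter, Finset.mem_univ, true_and]
      split <;> simp_all
    · ext i
      simp only [Finset.mem_filter, Finset.mem_univ, true_and]
      split <;> simp_all



lemma exists_perm {m : ℕ} (x y : Fin m → Fin 2) (h : Z y = Z x) :
    ∃ π : Equiv.Perm (Fin m), (fun i => x (π i)) = y := by
  have hc0 : Fintype.card {i // y i = 0} = Fintype.card {i // x i = 0} := by
    simp only [Fintype.card_subtype]; exact h
  have hc1 : Fintype.card {i // ¬ y i = 0} = Fintype.card {i // ¬ x i = 0} := by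
    rw [Fintype.card_subtype_compl, Fintype.card_subtype_compl, hc0]
  let e0 : {i // y i = 0} ≃ {i // x i = 0} := Fintype.equivOfCardEq hc0
  let e1 : {i // ¬ y i = 0} ≃ {i // ¬ x i = 0} := Fintype.equivOfCardEq hc1
  refine ⟨(Equiv.sumCompl (fun i => y i = 0)).symm.trans
    ((Equiv.sumCongr e0 e1).trans (Equiv.sumCompl (fun i => x i = 0))), ?_⟩
  funext i
  simp only [Equiv.trans_apply]
  by_cases hy : y i = 0
  · rw [Equiv.sumCompl_symm_apply_of_pos (p := fun i => y i = 0) hy]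
    simp only [Equiv.sumCongr_apply, Sum.map_inl, Equiv.sumCompl_apply_inl]
    rw [(e0 ⟨i, hy⟩).2, hy]
  · rw [Equiv.sumCompl_symm_apply_of_neg (p := fun i => y i = 0) hy]
    simp only [Equiv.sumCongr_apply, Sum.map_inr, Equiv.sumCompl_apply_inr]
    have h1 := (e1 ⟨i, hy⟩).2
    have : y i = 1 := by omega
    rw [this]
    omega

lemma fiber_card {m : ℕ} (x : Fin m → Fin 2) (π₀ : Equiv.Perm (Fin m)) :
    ((Finset.univ : Finset (Equiv.Perm (Fin m))).filter
        fun π => (fun i => x (π i)) = (fun i => x (π₀ i))).card =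
      (Z x).factorial * (m - Z x).factorial := by
  have key : ((Finset.univ : Finset (Equiv.Perm (Fin m))).filter
      fun π => (fun i => x (π i)) = (fun i => x (π₀ i))).card
      = Fintype.card {g : Equiv.Perm (Fin m) // x ∘ g = x} := by
    rw [Fintype.card_subtype]
    refine Finset.card_bij (fun π _ => π * π₀⁻¹) ?_ ?_ ?_
    · intro π hπ
      simp only [Finset.mem_filter, Finset.mem_univ, true_and] at hπ ⊢
      funext i
      have := congrFun hπ (π₀⁻¹ i)
      simpa using this
    · intro a _ b _ h; exact mul_right_cancel h
    · intro g hg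
      simp only [Finset.mem_filter, Finset.mem_univ, true_and] at hg
      refine ⟨g * π₀, ?_, by group⟩
      simp only [Finset.mem_filter, Finset.mem_univ, true_and]
      funext i
      simpa using congrFun hg (π₀ i)
  rw [key, DomMulAct.stabilizer_card x, Fin.prod_univ_two]
  have c0 : Fintype.card {a // x a = 0} = Z x := by
    simp only [Fintype.card_subtype]; rfl
  have c1 : Fintype.card {a // x a = 1} = m - Z x := by
    have : Fintype.card {a // x a = 1} = Fintype.card {a // ¬ x a = 0} := by
      apply Fintype.card_congr
      exact Equiv.subtypeEquivRight (by intro a; omega)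
    rw [this, Fintype.card_subtype_compl, c0, Fintype.card_fin]
  rw [c0, c1]



lemma card_pair (k n α j : ℕ) :
    ((Finset.univ : Finset (Fin (k + n) → Fin 2)).filter fun y =>
        Z (fun i : Fin k => y (Fin.castAdd n i)) = α ∧
        Z (fun i : Fin n => y (Fin.natAdd k i)) = j).card = k.choose α * n.choose j := by
  have h1 : k.choose α * n.choose j =
      (((Finset.univ : Finset (Fin k → Fin 2)).filter fun u => Z u = α) ×ˢ
       ((Finset.univ : Finset (Fin n → Fin 2)).filter fun v => Z v = j)).card := by
    rw [Finset.card_product, card_Z_eq, card_Z_eq]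
  rw [h1]
  refine Finset.card_nbij'
    (fun y => (fun i => y (Fin.castAdd n i), fun i => y (Fin.natAdd k i)))
    (fun p => Fin.append p.1 p.2) ?_ ?_ ?_ ?_
  · intro y hy
    simp only [Finset.mem_coe, Finset.mem_filter, Finset.mem_univ, true_and] at hy
    simp [Finset.mem_product, hy.1, hy.2]
  · intro p hp
    simp only [Finset.mem_coe, Finset.mem_product, Finset.mem_filter, Finset.mem_univ, true_and] at hp
    simp only [Finset.mem_coe, Finset.mem_filter, Finset.mem_univ, true_and]
    constructor
    · convert hp.1 using 2; funext i; exact Fin.append_left _ _ _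
    · convert hp.2 using 2; funext i; exact Fin.append_right _ _ _
  · intro y _
    funext i
    induction i using Fin.addCases with
    | left i => exact Fin.append_left _ _ _
    | right i => exact Fin.append_right _ _ _
  · intro p _
    ext i
    · simp [Fin.append_left]
    · simp [Fin.append_right]

lemma sqrt_arith (k n α j m : ℕ) (hm : m = k + n) (hα : α ≤ k) (hj : j ≤ n) :
    ((m.factorial : ℝ))⁻¹ *
      ((((α + j).factorial * (m - (α + j)).factorial : ℕ) : ℝ) *
        (((k.choose α * n.choose j : ℕ) : ℝ) *
          ((Real.sqrt (k.choose α))⁻¹ * (Real.sqrt (n.choose j))⁻¹))) =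
    Real.sqrt ((k.choose α : ℝ) * (n.choose j : ℝ) / ((k + n).choose (α + j) : ℝ)) *
      (Real.sqrt ((k + n).choose (α + j)))⁻¹ := by
  subst hm
  have hαj : α + j ≤ k + n := Nat.add_le_add hα hj
  have hfac : ((α + j).factorial * ((k + n) - (α + j)).factorial * (k + n).choose (α + j) : ℕ)
      = (k + n).factorial := by
    rw [← Nat.choose_mul_factorial_mul_factorial hαj]; ring
  have ha : (0:ℝ) < (k.choose α : ℝ) := by exact_mod_cast Nat.choose_pos hα
  have hb : (0:ℝ) < (n.choose j : ℝ) := by exact_mod_cast Nat.choose_pos hj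
  have hc : (0:ℝ) < ((k + n).choose (α + j) : ℝ) := by exact_mod_cast Nat.choose_pos hαj
  have hfacR : (((α + j).factorial : ℝ) * (((k + n) - (α + j)).factorial : ℝ)) *
      ((k + n).choose (α + j) : ℝ) = ((k + n).factorial : ℝ) := by exact_mod_cast hfac
  have sa := Real.mul_self_sqrt ha.le
  have sb := Real.mul_self_sqrt hb.le
  have sc := Real.mul_self_sqrt hc.le
  have hsa : (0:ℝ) < Real.sqrt (k.choose α) := Real.sqrt_pos.mpr ha
  have hsb : (0:ℝ) < Real.sqrt (n.choose j) := Real.sqrt_pos.mpr hb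
  have hsc : (0:ℝ) < Real.sqrt ((k + n).choose (α + j)) := Real.sqrt_pos.mpr hc
  have hmf : (0:ℝ) < ((k + n).factorial : ℝ) := by exact_mod_cast Nat.factorial_pos _
  rw [Real.sqrt_div (by positivity : (0:ℝ) ≤ (k.choose α : ℝ) * (n.choose j : ℝ)),
    Real.sqrt_mul ha.le]
  push_cast
  field_simp
  linear_combination (Real.sqrt (k.choose α) * Real.sqrt (n.choose j) *
      Real.sqrt (k.choose α) * Real.sqrt (n.choose j)) * hfacR -
    (((α + j).factorial : ℝ) * (((k + n) - (α + j)).factorial : ℝ) *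
      ((k + n).choose (α + j) : ℝ) * (n.choose j : ℝ)) * sa -
    (((α + j).factorial : ℝ) * (((k + n) - (α + j)).factorial : ℝ) *
      ((k + n).choose (α + j) : ℝ) * Real.sqrt (k.choose α) * Real.sqrt (k.choose α)) * sb +
    (((α + j).factorial : ℝ) * (((k + n) - (α + j)).factorial : ℝ) *
      (k.choose α : ℝ) * (n.choose j : ℝ)) * sc


/-- `Π_{k+n}(|D_k^α⟩ ⊗ |D_n^j⟩) = √(C(k,α)C(n,j)/C(k+n,α+j)) |D_{k+n}^{α+j}⟩`. -/
theorem symProj_dickeProd (k n α j : ℕ) (hα : α ≤ k) (hj : j ≤ n) :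
    symProj (k + n) (dickeProd k n α j) =
      ((Real.sqrt (((k.choose α : ℝ) * (n.choose j : ℝ)) /
        ((k + n).choose (α + j) : ℝ)) : ℂ)) • Dicke (k + n) (α + j) := by
  set m := k + n with hm
  ext x
  have lhs1 : symProj m (dickeProd k n α j) x =
      ((m.factorial : ℂ))⁻¹ * ∑ π : Equiv.Perm (Fin m),
        dickeProd k n α j (fun i => x (π i)) := by
    simp only [symProj, LinearMap.smul_apply, LinearMap.sum_apply]
    rw [PiLp.smul_apply]
    congr 1
    rw [WithLp.ofLp_sum, Finset.sum_apply]
    rfl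
  -- group the sum over permutations by the image vector y = x ∘ π
  have sum_comp' : ∑ π : Equiv.Perm (Fin m), dickeProd k n α j (fun i => x (π i)) =
      ∑ y ∈ Finset.univ.image (fun π : Equiv.Perm (Fin m) => fun i => x (π i)),
        (((Finset.univ : Finset (Equiv.Perm (Fin m))).filter
          fun π => (fun i => x (π i)) = y).card) • dickeProd k n α j y :=
    Finset.sum_comp (dickeProd k n α j) _
  have himage : Finset.univ.image (fun π : Equiv.Perm (Fin m) => fun i => x (π i)) =
      (Finset.univ : Finset (Fin m → Fin 2)).filter fun y => Z y = Z x := by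
    ext y
    simp only [Finset.mem_image, Finset.mem_univ, true_and, Finset.mem_filter]
    constructor
    · rintro ⟨π, rfl⟩; exact Z_comp_perm x π
    · intro h; obtain ⟨π, hπ⟩ := exists_perm x y h; exact ⟨π, hπ⟩
  -- all fibers over the image have the same cardinality
  have hfibconst : ∀ y ∈ (Finset.univ : Finset (Fin m → Fin 2)).filter fun y => Z y = Z x,
      (((Finset.univ : Finset (Equiv.Perm (Fin m))).filter
        fun π => (fun i => x (π i)) = y).card) • dickeProd k n α j y =
      (((Z x).factorial * (m - Z x).factorial : ℕ) : ℂ) * dickeProd k n α j y := by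
    intro y hy
    rw [← himage] at hy
    obtain ⟨π₀, _, hπ₀⟩ := Finset.mem_image.mp hy
    rw [← hπ₀, fiber_card x π₀]
    simp [nsmul_eq_mul]
    left; left; rfl
  rw [lhs1, sum_comp', himage, Finset.sum_congr rfl hfibconst, ← Finset.mul_sum]
  -- the value of the dickeProd as an explicit if-then-else
  have hdval : ∀ y : Fin m → Fin 2, dickeProd k n α j y =
      if (Z (fun i : Fin k => y (Fin.castAdd n i)) = α ∧
          Z (fun i : Fin n => y (Fin.natAdd k i)) = j)
        then ((Real.sqrt (k.choose α) : ℂ))⁻¹ * ((Real.sqrt (n.choose j) : ℂ))⁻¹ else 0 := by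
    intro y
    show (if Z (fun i : Fin k => y (Fin.castAdd n i)) = α then _ else 0) *
      (if Z (fun i : Fin n => y (Fin.natAdd k i)) = j then _ else 0) = _
    split_ifs with h1 h2 h3 <;> simp_all
  -- RHS value
  have rhsval : (((Real.sqrt (((k.choose α : ℝ) * (n.choose j : ℝ)) /
        ((k + n).choose (α + j) : ℝ)) : ℂ)) • Dicke (k + n) (α + j)) x =
      ((Real.sqrt (((k.choose α : ℝ) * (n.choose j : ℝ)) /
        ((k + n).choose (α + j) : ℝ)) : ℂ)) *
      (if Z x = α + j then ((Real.sqrt ((k+n).choose (α+j)) : ℂ))⁻¹ else 0) := by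
    rw [PiLp.smul_apply, smul_eq_mul]
    rfl
  rw [rhsval]
  by_cases ht : Z x = α + j
  · -- main case
    have hsum : ∑ y ∈ (Finset.univ : Finset (Fin m → Fin 2)).filter (fun y => Z y = Z x),
        dickeProd k n α j y =
        (((k.choose α * n.choose j : ℕ)) : ℂ) *
          (((Real.sqrt (k.choose α) : ℂ))⁻¹ * ((Real.sqrt (n.choose j) : ℂ))⁻¹) := by
      rw [Finset.sum_filter_of_ne]
      · simp only [hdval]
        rw [Finset.sum_ite, Finset.sum_const, Finset.sum_const_zero, add_zero,
          card_pair k n α j, nsmul_eq_mul]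
      · intro y _ hy0
        rw [hdval] at hy0
        by_cases hc : Z (fun i : Fin k => y (Fin.castAdd n i)) = α ∧
            Z (fun i : Fin n => y (Fin.natAdd k i)) = j
        · rw [Z_add y, hc.1, hc.2, ht]
        · simp [hc] at hy0
    rw [hsum, ht, if_pos rfl]
    have h := sqrt_arith k n α j m hm hα hj
    have h2 := congrArg (Complex.ofReal) h
    push_cast at h2 ⊢
    convert h2 using 2

  · -- degenerate case: everything vanishes
    rw [if_neg ht, mul_zero]
    have : ∑ y ∈ (Finset.univ : Finset (Fin m → Fin 2)).filter (fun y => Z y = Z x),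
        dickeProd k n α j y = 0 := by
      refine Finset.sum_eq_zero fun y hy => ?_
      rw [hdval]
      simp only [Finset.mem_filter] at hy
      rw [if_neg]
      rintro ⟨h1, h2⟩
      exact ht (hy.2 ▸ (Z_add y ▸ by rw [h1, h2]) : Z x = α + j)
    rw [this, mul_zero, mul_zero]
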